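/- arXiv:2410.18484 — 6 statements merged into one kernel-verified Lean document; each statement's English description precedes it below -/
import Mathlib

section
/- Let x₀ ∈ X = {x | Cx ≤ b} and define J(x₀) and X_r(x₀) via a safety margin α with α_j > 0 for all j. For a point y ∈ X, define the sphere Δ = {x | ‖x − y‖₂ ≤ c} where c = min over j ∉ J(x₀) of (b_j − C_j y)/‖C_j‖₂ (with c = +∞ if J(x₀) covers all indices, and assume each C_j ≠ 0). Then X_r(x₀) ∩ Δ ⊆ X, and y ∈ Δ. -/
open scoped RealInnerProductSpace

/-! By Cauchy–Schwarz, `⟪C_j, x⟫ ≤ ⟪C_j, y⟫ + ‖C_j‖ ‖x - y‖`, so the closed ball around `y` of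
radius `(b_j - ⟪C_j, y⟫) / ‖C_j‖` lies in the half-space `⟪C_j, ·⟫ ≤ b_j`. The ball `Δ` lies in
all these half-spaces for `j ∉ J(x₀)`, and `X_r(x₀)` imposes the remaining constraints.
Since `y ∈ X`, every radius is nonnegative, so `y ∈ Δ`. -/

lemma real_inner_le_of_norm_sub_le_div {F : Type*} [NormedAddCommGroup F]
    [InnerProductSpace ℝ F] {v x y : F} {β : ℝ} (hy : ⟪v, y⟫ ≤ β)
    (hxy : ‖x - y‖ ≤ (β - ⟪v, y⟫) / ‖v‖) : ⟪v, x⟫ ≤ β := by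
  rcases eq_or_ne v 0 with rfl | hv
  · simpa using hy
  have hmul : ‖x - y‖ * ‖v‖ ≤ β - ⟪v, y⟫ := (le_div_iff₀ (norm_pos_iff.mpr hv)).mp hxy
  have hsplit : ⟪v, x⟫ = ⟪v, y⟫ + ⟪v, x - y⟫ := by rw [inner_sub_right]; ring
  nlinarith [real_inner_le_norm v (x - y)]

theorem ball_delta_set_valid_general
    {n nx : ℕ} (C : Fin nx → EuclideanSpace ℝ (Fin n)) (b α : Fin nx → ℝ)
    (x₀ : EuclideanSpace ℝ (Fin n))
    (y : EuclideanSpace ℝ (Fin n)) (hy : ∀ j, ⟪C j, y⟫ ≤ b j)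
    (c : EReal)
    (hc : c = sInf ((fun j => (((b j - ⟪C j, y⟫) / ‖C j‖ : ℝ) : EReal)) ''
      {j | ¬ (⟪C j, x₀⟫ > b j - α j)})) :
    ({x : EuclideanSpace ℝ (Fin n) |
        ∀ j ∈ {j | ⟪C j, x₀⟫ > b j - α j}, ⟪C j, x⟫ ≤ b j} ∩
      {x : EuclideanSpace ℝ (Fin n) | ((‖x - y‖ : ℝ) : EReal) ≤ c} ⊆
        {x : EuclideanSpace ℝ (Fin n) | ∀ j, ⟪C j, x⟫ ≤ b j}) ∧
    y ∈ {x : EuclideanSpace ℝ (Fin n) | ((‖x - y‖ : ℝ) : EReal) ≤ c} := by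
  subst hc
  constructor
  · rintro x ⟨hx_active, hx_ball⟩ j
    by_cases hj : ⟪C j, x₀⟫ > b j - α j
    · exact hx_active j hj
    · have hc_le : ((‖x - y‖ : ℝ) : EReal) ≤ (((b j - ⟪C j, y⟫) / ‖C j‖ : ℝ) : EReal) := by
        refine hx_ball.trans (sInf_le ?_)
        exact ⟨j, hj, rfl⟩
      exact real_inner_le_of_norm_sub_le_div (hy j) (EReal.coe_le_coe_iff.mp hc_le)
  · show ((‖y - y‖ : ℝ) : EReal) ≤ _
    rw [sub_self, norm_zero]
    refine le_sInf ?_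
    rintro _ ⟨j, -, rfl⟩
    exact EReal.coe_le_coe_iff.mpr (div_nonneg (sub_nonneg.mpr (hy j)) (norm_nonneg _))

/-- with Δ a Euclidean ball around y ∈ X of radius
c = min_{j ∉ J(x₀)} (b_j − ⟪C_j, y⟫)/‖C_j‖ (interpreted in EReal, so c = +∞ when
J(x₀) covers all indices), we have X_r(x₀) ∩ Δ ⊆ X and y ∈ Δ. -/
theorem ball_delta_set_valid
    {n nx : ℕ} (C : Fin nx → EuclideanSpace ℝ (Fin n)) (b α : Fin nx → ℝ)
    (hα : ∀ j, 0 < α j) (hC : ∀ j, C j ≠ 0)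
    (x₀ : EuclideanSpace ℝ (Fin n)) (hx₀ : ∀ j, ⟪C j, x₀⟫ ≤ b j)
    (y : EuclideanSpace ℝ (Fin n)) (hy : ∀ j, ⟪C j, y⟫ ≤ b j)
    (c : EReal)
    (hc : c = sInf ((fun j => (((b j - ⟪C j, y⟫) / ‖C j‖ : ℝ) : EReal)) ''
      {j | ¬ (⟪C j, x₀⟫ > b j - α j)})) :
    ({x : EuclideanSpace ℝ (Fin n) |
        ∀ j ∈ {j | ⟪C j, x₀⟫ > b j - α j}, ⟪C j, x⟫ ≤ b j} ∩
      {x : EuclideanSpace ℝ (Fin n) | ((‖x - y‖ : ℝ) : EReal) ≤ c} ⊆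
        {x : EuclideanSpace ℝ (Fin n) | ∀ j, ⟪C j, x⟫ ≤ b j}) ∧
    y ∈ {x : EuclideanSpace ℝ (Fin n) | ((‖x - y‖ : ℝ) : EReal) ≤ c} :=
  ball_delta_set_valid_general C b α x₀ y hy c hc
end

section
/- Theorem 1 (recursive feasibility under controlled invariance): Assume X is controlled invariant for f with input set U, and suppose for all x ∈ X the set Δ(x) satisfies (1) X_r(x) ∩ Δ(x) ⊆ X and (2) there exists ū ∈ U with f(x, ū) ∈ X_r(x) ∩ Δ(x). Then the feasible set of the reduced MPC problem, X_F^r = {x ∈ X | there exist u_0,…,u_{N−1} ∈ U with states x_0 = x, x_{i+1} = f(x_i, u_i), x_1 ∈ X_r(x) ∩ Δ(x), and x_i ∈ X_r(x) for i = 2,…,N}, equals X. -/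
/-!
Apply the input `ū` from condition (2) first: by condition (1) the state `f x ū` lies in `X`, and
controlled invariance keeps every later state in `X ⊆ X_r(x)`, so every `x ∈ X` is feasible.
-/

theorem exists_trajectory_forall_mem_of_controlledInvariant {α β : Type*} {f : α → β → α}
    {X : Set α} {U : Set β} (hCI : ∀ x ∈ X, ∃ u ∈ U, f x u ∈ X) {x₀ : α} (hx₀ : x₀ ∈ X) :
    ∃ (xs : ℕ → α) (us : ℕ → β), xs 0 = x₀ ∧ (∀ i, us i ∈ U) ∧
      (∀ i, xs (i + 1) = f (xs i) (us i)) ∧ ∀ i, xs i ∈ X := by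
  choose g hgU hgX using hCI
  let orbit : ℕ → X := fun k => Nat.rec (motive := fun _ => X) ⟨x₀, hx₀⟩ (fun _ y => ⟨f y (g y y.2), hgX y y.2⟩) k
  exact ⟨fun k => (orbit k).1, fun k => g (orbit k) (orbit k).2, rfl, fun k => hgU _ _,
    fun _ => rfl, fun k => (orbit k).2⟩

theorem ca_mpc_feasible_set_eq_general
    {n m : ℕ} (f : (Fin n → ℝ) → (Fin m → ℝ) → (Fin n → ℝ))
    (X : Set (Fin n → ℝ)) (U : Set (Fin m → ℝ)) (N : ℕ)
    (Xr Δ : (Fin n → ℝ) → Set (Fin n → ℝ))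
    (hXr : ∀ x ∈ X, X ⊆ Xr x)
    (hCI : ∀ x ∈ X, ∃ u ∈ U, f x u ∈ X)
    (hΔ1 : ∀ x ∈ X, Xr x ∩ Δ x ⊆ X)
    (hΔ2 : ∀ x ∈ X, ∃ u ∈ U, f x u ∈ Xr x ∩ Δ x) :
    {x | x ∈ X ∧ ∃ (xs : ℕ → (Fin n → ℝ)) (us : ℕ → (Fin m → ℝ)),
        xs 0 = x ∧ (∀ i < N, us i ∈ U) ∧
        (∀ i < N, xs (i + 1) = f (xs i) (us i)) ∧
        xs 1 ∈ Xr x ∩ Δ x ∧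
        (∀ i, 2 ≤ i → i ≤ N → xs i ∈ Xr x)} = X := by
  refine Set.Subset.antisymm (fun x hx => hx.1) fun x hx => ⟨hx, ?_⟩
  obtain ⟨ū, hūU, hū⟩ := hΔ2 x hx
  obtain ⟨ys, vs, hys0, hvsU, hstep, hysX⟩ :=
    exists_trajectory_forall_mem_of_controlledInvariant hCI (hΔ1 x hx hū)
  refine ⟨fun | 0 => x | i + 1 => ys i, fun | 0 => ū | i + 1 => vs i, rfl, ?_, ?_, ?_, ?_⟩
  · rintro (_ | i) -
    exacts [hūU, hvsU i]
  · rintro (_ | i) -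
    exacts [hys0, hstep i]
  · show ys 0 ∈ Xr x ∩ Δ x
    rwa [hys0]
  · rintro (_ | i) hi -
    · omega
    · exact hXr x hx (hysX i)

/-- Theorem 1, feasibility: under controlled invariance of X and the two
conditions on Δ, the feasible set of the reduced MPC problem equals X. -/
theorem ca_mpc_feasible_set_eq
    {n m : ℕ} (f : (Fin n → ℝ) → (Fin m → ℝ) → (Fin n → ℝ))
    (X : Set (Fin n → ℝ)) (U : Set (Fin m → ℝ)) (N : ℕ) (hN : 1 ≤ N)
    (Xr Δ : (Fin n → ℝ) → Set (Fin n → ℝ))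
    (hXr : ∀ x ∈ X, X ⊆ Xr x)
    (hCI : ∀ x ∈ X, ∃ u ∈ U, f x u ∈ X)
    (hΔ1 : ∀ x ∈ X, Xr x ∩ Δ x ⊆ X)
    (hΔ2 : ∀ x ∈ X, ∃ u ∈ U, f x u ∈ Xr x ∩ Δ x) :
    {x | x ∈ X ∧ ∃ (xs : ℕ → (Fin n → ℝ)) (us : ℕ → (Fin m → ℝ)),
        xs 0 = x ∧ (∀ i < N, us i ∈ U) ∧
        (∀ i < N, xs (i + 1) = f (xs i) (us i)) ∧
        xs 1 ∈ Xr x ∩ Δ x ∧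
        (∀ i, 2 ≤ i → i ≤ N → xs i ∈ Xr x)} = X :=
  ca_mpc_feasible_set_eq_general f X U N Xr Δ hXr hCI hΔ1 hΔ2
end

section
/- Under the hypotheses of Theorem 1 (X controlled invariant; for all x ∈ X, X_r(x) ∩ Δ(x) ⊆ X and there exists ū ∈ U with f(x, ū) ∈ X_r(x) ∩ Δ(x)), any state x₁ produced as the first predicted state of a feasible solution of the reduced MPC problem at x ∈ X satisfies x₁ ∈ X; consequently, for any selection u = K(x) ∈ U with f(x, K(x)) ∈ X_r(x) ∩ Δ(x), the closed-loop trajectory x_{k+1} = f(x_k, K(x_k)) starting from x₀ ∈ X satisfies x_k ∈ X for all k ∈ ℕ. -/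
open Set

theorem Set.MapsTo.mem_of_forall_succ_eq {α : Type*} {s : Set α} {g : α → α} (hg : MapsTo g s s)
    {xs : ℕ → α} (h0 : xs 0 ∈ s) (hstep : ∀ k, xs (k + 1) = g (xs k)) : ∀ k, xs k ∈ s
  | 0 => h0
  | k + 1 => hstep k ▸ hg (hg.mem_of_forall_succ_eq h0 hstep k)

theorem ca_mpc_constraint_satisfaction_general
    {n m : ℕ} (f : (Fin n → ℝ) → (Fin m → ℝ) → (Fin n → ℝ))
    (X : Set (Fin n → ℝ)) (U : Set (Fin m → ℝ))
    (Xr Δ : (Fin n → ℝ) → Set (Fin n → ℝ))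
    (hΔ1 : ∀ x ∈ X, Xr x ∩ Δ x ⊆ X)
    (K : (Fin n → ℝ) → (Fin m → ℝ))
    (hK : ∀ x ∈ X, K x ∈ U ∧ f x (K x) ∈ Xr x ∩ Δ x) :
    (∀ x ∈ X, ∀ x₁ ∈ Xr x ∩ Δ x, x₁ ∈ X) ∧
    (∀ xs : ℕ → (Fin n → ℝ), xs 0 ∈ X →
      (∀ k, xs (k + 1) = f (xs k) (K (xs k))) → ∀ k, xs k ∈ X) := by
  have hfeasible : ∀ x ∈ X, ∀ x₁ ∈ Xr x ∩ Δ x, x₁ ∈ X := fun x hx _ hx₁ => hΔ1 x hx hx₁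
  have hclosedLoop : MapsTo (fun x => f x (K x)) X X := fun x hx => hfeasible x hx _ (hK x hx).2
  exact ⟨hfeasible, fun _ h0 hstep => hclosedLoop.mem_of_forall_succ_eq h0 hstep⟩

/-- Theorem 1, constraint satisfaction: the first predicted state of
any feasible solution lies in X, and the closed loop under any feasible feedback K
stays in X. -/
theorem ca_mpc_constraint_satisfaction
    {n m : ℕ} (f : (Fin n → ℝ) → (Fin m → ℝ) → (Fin n → ℝ))
    (X : Set (Fin n → ℝ)) (U : Set (Fin m → ℝ))
    (Xr Δ : (Fin n → ℝ) → Set (Fin n → ℝ))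
    (hCI : ∀ x ∈ X, ∃ u ∈ U, f x u ∈ X)
    (hΔ1 : ∀ x ∈ X, Xr x ∩ Δ x ⊆ X)
    (hΔ2 : ∀ x ∈ X, ∃ u ∈ U, f x u ∈ Xr x ∩ Δ x)
    (K : (Fin n → ℝ) → (Fin m → ℝ))
    (hK : ∀ x ∈ X, K x ∈ U ∧ f x (K x) ∈ Xr x ∩ Δ x) :
    (∀ x ∈ X, ∀ x₁ ∈ Xr x ∩ Δ x, x₁ ∈ X) ∧
    (∀ xs : ℕ → (Fin n → ℝ), xs 0 ∈ X →
      (∀ k, xs (k + 1) = f (xs k) (K (xs k))) → ∀ k, xs k ∈ X) :=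
  ca_mpc_constraint_satisfaction_general f X U Xr Δ hΔ1 K hK
end

section
/- Theorem 2, recursive feasibility part: Under the hypotheses of Theorem 2 (X_T ⊆ X controlled invariant, and for all (x̃₁,…,x̃_N) ∈ S: X_r(x̃_i) ∩ Δ(x̃_i) ⊆ X and x̃_i ∈ Δ(x̃_i) for i = 2,…,N), any feasible state trajectory (x₁,…,x_N) of the reduced terminal-set MPC problem parameterized by a sequence in S itself belongs to S. -/
/-- The set S of dynamically feasible state sequences of length N
(indexed by 0,…,N−1, i.e. `xs i` represents x̃_{i+1}) that stay in X and end in X_T. -/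
def feasSeqSet {n m : ℕ} (f : (Fin n → ℝ) → (Fin m → ℝ) → (Fin n → ℝ))
    (X : Set (Fin n → ℝ)) (U : Set (Fin m → ℝ)) (XT : Set (Fin n → ℝ)) (N : ℕ) :
    Set (ℕ → (Fin n → ℝ)) :=
  {xs | (∀ i < N, xs i ∈ X) ∧ xs (N - 1) ∈ XT ∧
    ∃ us : ℕ → (Fin m → ℝ), ∀ i, i + 1 < N → us i ∈ U ∧ xs (i + 1) = f (xs i) (us i)}

theorem shift_mem_feasSeqSet {n m : ℕ} {f : (Fin n → ℝ) → (Fin m → ℝ) → (Fin n → ℝ)}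
    {X : Set (Fin n → ℝ)} {U : Set (Fin m → ℝ)} {XT : Set (Fin n → ℝ)} {N : ℕ}
    (hN : 1 ≤ N) (us : ℕ → (Fin m → ℝ)) (xs : ℕ → (Fin n → ℝ))
    (hX : ∀ i, 1 ≤ i → i ≤ N → xs i ∈ X) (hT : xs N ∈ XT)
    (hdyn : ∀ i, 1 ≤ i → i < N → us i ∈ U ∧ xs (i + 1) = f (xs i) (us i)) :
    (fun j => xs (j + 1)) ∈ feasSeqSet f X U XT N := by
  refine ⟨fun i hi => hX (i + 1) (by omega) hi, ?_, fun i => us (i + 1),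
    fun i hi => hdyn (i + 1) (by omega) hi⟩
  show xs (N - 1 + 1) ∈ XT
  rwa [Nat.sub_add_cancel hN]

/-- The parameter `xt i` is x̃_{i+1}, and the trajectory (x₁,…,x_N) is `fun j => xs (j + 1)`. -/
theorem ca_mpc_terminal_recursive_feasibility_general
    {n m : ℕ} (f : (Fin n → ℝ) → (Fin m → ℝ) → (Fin n → ℝ))
    (X : Set (Fin n → ℝ)) (U : Set (Fin m → ℝ)) (XT : Set (Fin n → ℝ))
    (N : ℕ) (hN : 2 ≤ N) (hsub : XT ⊆ X)
    (Xr Δ : (Fin n → ℝ) → Set (Fin n → ℝ))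
    (hΔ : ∀ xt ∈ feasSeqSet f X U XT N, ∀ i, 1 ≤ i → i < N →
      Xr (xt i) ∩ Δ (xt i) ⊆ X ∧ xt i ∈ Δ (xt i))
    (xt : ℕ → (Fin n → ℝ)) (hxt : xt ∈ feasSeqSet f X U XT N)
    (us : ℕ → (Fin m → ℝ)) (xs : ℕ → (Fin n → ℝ))
    (hdyn : ∀ i < N, us i ∈ U ∧ xs (i + 1) = f (xs i) (us i))
    (hstate : ∀ i, 1 ≤ i → i < N → xs i ∈ Xr (xt i) ∩ Δ (xt i))
    (hterm : xs N ∈ XT) :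
    (fun j => xs (j + 1)) ∈ feasSeqSet f X U XT N := by
  have hX : ∀ i, 1 ≤ i → i ≤ N → xs i ∈ X := by
    intro i hi hiN
    rcases hiN.lt_or_eq with hlt | rfl
    · exact (hΔ xt hxt i hi hlt).1 (hstate i hi hlt)
    · exact hsub hterm
  exact shift_mem_feasSeqSet (by omega) us xs hX hterm fun i _ hi => hdyn i hi

/-- Theorem 2, recursive feasibility: any feasible state trajectory
(x₁,…,x_N) of the reduced terminal-set MPC problem parameterized by a sequence in S
itself belongs to S.  (The parameter `xt i` is x̃_{i+1}; the trajectory is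
`fun j => xs (j+1)`, i.e. (x₁,…,x_N).) -/
theorem ca_mpc_terminal_recursive_feasibility
    {n m : ℕ} (f : (Fin n → ℝ) → (Fin m → ℝ) → (Fin n → ℝ))
    (X : Set (Fin n → ℝ)) (U : Set (Fin m → ℝ)) (XT : Set (Fin n → ℝ))
    (N : ℕ) (hN : 2 ≤ N) (hsub : XT ⊆ X)
    (hCI : ∀ x ∈ XT, ∃ u ∈ U, f x u ∈ XT)
    (Xr Δ : (Fin n → ℝ) → Set (Fin n → ℝ))
    (hΔ : ∀ xt ∈ feasSeqSet f X U XT N, ∀ i, 1 ≤ i → i < N →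
      Xr (xt i) ∩ Δ (xt i) ⊆ X ∧ xt i ∈ Δ (xt i))
    (xt : ℕ → (Fin n → ℝ)) (hxt : xt ∈ feasSeqSet f X U XT N)
    (us : ℕ → (Fin m → ℝ)) (xs : ℕ → (Fin n → ℝ))
    (h0 : xs 0 = xt 0)
    (hdyn : ∀ i < N, us i ∈ U ∧ xs (i + 1) = f (xs i) (us i))
    (hstate : ∀ i, 1 ≤ i → i < N → xs i ∈ Xr (xt i) ∩ Δ (xt i))
    (hterm : xs N ∈ XT) :
    (fun j => xs (j + 1)) ∈ feasSeqSet f X U XT N :=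
  ca_mpc_terminal_recursive_feasibility_general f X U XT N hN hsub Xr Δ hΔ xt hxt us xs hdyn hstate
    hterm
end

section
/- Let X = {x | Cx ≤ b} with α ≥ 0 and J, X_r as usual. For a sequence X_k = (x₂,…,x_N) of states, define J_c(X_k) = {1,…,n_x} \ ⋂_{i=2}^N J(x_i) and X_c(X_k) = {x | C_j x ≤ b_j, j ∈ J_c(X_k)}. If a set Δ ⊆ X_c(X_k), then for every i ∈ {2,…,N}, X_r(x_i) ∩ Δ ⊆ X. -/
open Matrix

theorem delta_in_complement_polyhedron_general
    {n nx : ℕ} (C : Fin nx → (Fin n → ℝ)) (b α : Fin nx → ℝ)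
    (N : ℕ)
    (xt : ℕ → (Fin n → ℝ)) (Δ : Set (Fin n → ℝ))
    (hΔ : Δ ⊆ {x : Fin n → ℝ |
      ∀ j ∈ (Set.univ \ ⋂ i ∈ Set.Icc 2 N, {j | C j ⬝ᵥ xt i > b j - α j} :
        Set (Fin nx)), C j ⬝ᵥ x ≤ b j}) :
    ∀ i ∈ Set.Icc 2 N,
      {x : Fin n → ℝ | ∀ j ∈ {j | C j ⬝ᵥ xt i > b j - α j}, C j ⬝ᵥ x ≤ b j} ∩ Δ ⊆
        {x : Fin n → ℝ | ∀ j, C j ⬝ᵥ x ≤ b j} := by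
  intro i hi x ⟨hx_reduced, hx_Δ⟩ j
  by_cases hj : j ∈ ⋂ i ∈ Set.Icc 2 N, {j | C j ⬝ᵥ xt i > b j - α j}
  · exact hx_reduced j (Set.mem_iInter₂.mp hj i hi)
  · exact hΔ hx_Δ j ⟨Set.mem_univ j, hj⟩

/-- with J_c(X_k) = {1,…,n_x} \ ⋂_{i=2}^N J(x_i) and
X_c(X_k) the corresponding polyhedron, if Δ ⊆ X_c(X_k), then
X_r(x_i) ∩ Δ ⊆ X for every i ∈ {2,…,N}. -/
theorem delta_in_complement_polyhedron
    {n nx : ℕ} (C : Fin nx → (Fin n → ℝ)) (b α : Fin nx → ℝ)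
    (hα : ∀ j, 0 ≤ α j) (N : ℕ) (hN : 2 ≤ N)
    (xt : ℕ → (Fin n → ℝ)) (Δ : Set (Fin n → ℝ))
    (hΔ : Δ ⊆ {x : Fin n → ℝ |
      ∀ j ∈ (Set.univ \ ⋂ i ∈ Set.Icc 2 N, {j | C j ⬝ᵥ xt i > b j - α j} :
        Set (Fin nx)), C j ⬝ᵥ x ≤ b j}) :
    ∀ i ∈ Set.Icc 2 N,
      {x : Fin n → ℝ | ∀ j ∈ {j | C j ⬝ᵥ xt i > b j - α j}, C j ⬝ᵥ x ≤ b j} ∩ Δ ⊆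
        {x : Fin n → ℝ | ∀ j, C j ⬝ᵥ x ≤ b j} :=
  delta_in_complement_polyhedron_general C b α N xt Δ hΔ
end

section
/- Let X_F^T(x₀) = {x₀ ∈ X | ∃ (u_0,…,u_{N−1}) ∈ Uᴺ with x_{i+1} = f(x_i,u_i), x_i ∈ X for i = 1,…,N−1, and x_N ∈ X_T} be the feasible set of the terminal-set MPC problem. If X_T ⊆ X is controlled invariant for f with input set U and x₀ ∈ X_F^T, then for any feasible trajectory the successor state x₁ satisfies x₁ ∈ X_F^T (recursive feasibility of standard terminal-set MPC). -/
def terminalFeasSet {n m : ℕ} (f : (Fin n → ℝ) → (Fin m → ℝ) → (Fin n → ℝ))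
    (X : Set (Fin n → ℝ)) (U : Set (Fin m → ℝ)) (XT : Set (Fin n → ℝ)) (N : ℕ) :
    Set (Fin n → ℝ) :=
  {x | x ∈ X ∧ ∃ (xs : ℕ → (Fin n → ℝ)) (us : ℕ → (Fin m → ℝ)),
    xs 0 = x ∧ (∀ i < N, us i ∈ U ∧ xs (i + 1) = f (xs i) (us i)) ∧
    (∀ i, 1 ≤ i → i < N → xs i ∈ X) ∧ xs N ∈ XT}

def IsFeasibleTrajectory {α β : Type*} (f : α → β → α) (X : Set α) (U : Set β)
    (XT : Set α) (N : ℕ) (xs : ℕ → α) (us : ℕ → β) : Prop :=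
  (∀ i < N, us i ∈ U ∧ xs (i + 1) = f (xs i) (us i)) ∧
    (∀ i, 1 ≤ i → i < N → xs i ∈ X) ∧ xs N ∈ XT

theorem mem_terminalFeasSet_iff {n m : ℕ} {f : (Fin n → ℝ) → (Fin m → ℝ) → (Fin n → ℝ)}
    {X : Set (Fin n → ℝ)} {U : Set (Fin m → ℝ)} {XT : Set (Fin n → ℝ)} {N : ℕ}
    {x : Fin n → ℝ} :
    x ∈ terminalFeasSet f X U XT N ↔
      x ∈ X ∧ ∃ xs us, xs 0 = x ∧ IsFeasibleTrajectory f X U XT N xs us :=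
  Iff.rfl

namespace IsFeasibleTrajectory

variable {α β : Type*} {f : α → β → α} {X : Set α} {U : Set β} {XT : Set α} {N : ℕ}
  {xs : ℕ → α} {us : ℕ → β}

/-- The standard shifted candidate: drop the first step and append an input `u` that keeps
the terminal state in `XT`. -/
theorem shift (h : IsFeasibleTrajectory f X U XT N xs us) (hN : 1 ≤ N) (hsub : XT ⊆ X)
    {u : β} (hu : u ∈ U) (huT : f (xs N) u ∈ XT) :
    IsFeasibleTrajectory f X U XT N
      (Function.update (fun i => xs (i + 1)) N (f (xs N) u))
      (Function.update (fun i => us (i + 1)) (N - 1) u) := by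
  obtain ⟨hdyn, hstate, hterm⟩ := h
  refine ⟨fun i hi => ?_, fun i hi₁ hiN => ?_, by simpa using huT⟩
  · rcases Nat.lt_or_ge (i + 1) N with hlt | hge
    · rw [Function.update_of_ne hlt.ne, Function.update_of_ne hi.ne,
        Function.update_of_ne (by omega)]
      exact hdyn (i + 1) hlt
    · obtain rfl : N = i + 1 := by omega
      simp [hu]
  · rw [Function.update_of_ne hiN.ne]
    rcases Nat.lt_or_ge (i + 1) N with hlt | hge
    · exact hstate (i + 1) (by omega) hlt
    · obtain rfl : N = i + 1 := by omega
      exact hsub hterm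

end IsFeasibleTrajectory

theorem terminal_mpc_recursive_feasibility_general
    {n m : ℕ} (f : (Fin n → ℝ) → (Fin m → ℝ) → (Fin n → ℝ))
    (X : Set (Fin n → ℝ)) (U : Set (Fin m → ℝ)) (XT : Set (Fin n → ℝ))
    (N : ℕ) (hN : 2 ≤ N) (hsub : XT ⊆ X)
    (hCI : ∀ x ∈ XT, ∃ u ∈ U, f x u ∈ XT)
    (xs : ℕ → (Fin n → ℝ)) (us : ℕ → (Fin m → ℝ))
    (hdyn : ∀ i < N, us i ∈ U ∧ xs (i + 1) = f (xs i) (us i))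
    (hstate : ∀ i, 1 ≤ i → i < N → xs i ∈ X)
    (hterm : xs N ∈ XT) :
    xs 1 ∈ terminalFeasSet f X U XT N := by
  obtain ⟨u, hu, huT⟩ := hCI (xs N) hterm
  have hfeas : IsFeasibleTrajectory f X U XT N xs us := ⟨hdyn, hstate, hterm⟩
  exact mem_terminalFeasSet_iff.mpr ⟨hstate 1 le_rfl hN, _, _,
    Function.update_of_ne (by omega) _ _, hfeas.shift (by omega) hsub hu huT⟩

/-- recursive feasibility of standard terminal-set MPC: for any feasible
trajectory from x₀ ∈ X_F^T, the successor state x₁ is again in X_F^T. -/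
theorem terminal_mpc_recursive_feasibility
    {n m : ℕ} (f : (Fin n → ℝ) → (Fin m → ℝ) → (Fin n → ℝ))
    (X : Set (Fin n → ℝ)) (U : Set (Fin m → ℝ)) (XT : Set (Fin n → ℝ))
    (N : ℕ) (hN : 2 ≤ N) (hXT : XT.Nonempty) (hsub : XT ⊆ X)
    (hCI : ∀ x ∈ XT, ∃ u ∈ U, f x u ∈ XT)
    (x₀ : Fin n → ℝ) (hx₀ : x₀ ∈ terminalFeasSet f X U XT N)
    (xs : ℕ → (Fin n → ℝ)) (us : ℕ → (Fin m → ℝ))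
    (h0 : xs 0 = x₀)
    (hdyn : ∀ i < N, us i ∈ U ∧ xs (i + 1) = f (xs i) (us i))
    (hstate : ∀ i, 1 ≤ i → i < N → xs i ∈ X)
    (hterm : xs N ∈ XT) :
    xs 1 ∈ terminalFeasSet f X U XT N :=
  terminal_mpc_recursive_feasibility_general f X U XT N hN hsub hCI xs us hdyn hstate hterm
end
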